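/- arXiv:1805.04652 — 4 statements merged into one kernel-verified Lean document; each statement's English description precedes it below -/
import Mathlib

section
/- Every partial action of a group G on a set X is a lax partial action; conversely, a lax partial action α is a partial action if and only if α_g(X_{g⁻¹}) ⊆ X_g for all g ∈ G. -/
/-- A partial action of a group `G` on a set `X` (PA1)-(PA3). -/
def IsPartialAction {G X : Type*} [Group G] (Xg : G → Set X) (α : G → X → X) : Prop :=
  (Xg 1 = Set.univ ∧ ∀ x : X, α 1 x = x) ∧
  (∀ g h : G, α g '' (Xg g⁻¹ ∩ Xg h) ⊆ Xg g ∩ Xg (g * h)) ∧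
  (∀ g h : G, ∀ x ∈ Xg g⁻¹ ∩ Xg (h * g)⁻¹, α h (α g x) = α (h * g) x)

/-- A lax partial action of a group `G` on a set `X` (LPA1)-(LPA3). -/
def IsLaxPartialAction {G X : Type*} [Group G] (Xg : G → Set X) (α : G → X → X) : Prop :=
  (Xg 1 = Set.univ ∧ ∀ x : X, α 1 x = x) ∧
  (∀ g h : G, ∀ x ∈ Xg g⁻¹, α g x ∈ Xg h⁻¹ → x ∈ Xg (h * g)⁻¹) ∧
  (∀ g h : G, ∀ x ∈ Xg g⁻¹, α g x ∈ Xg h⁻¹ → α h (α g x) = α (h * g) x)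

/-- Every partial action is a lax partial action; a lax partial action is a
partial action if and only if `α_g(X_{g⁻¹}) ⊆ X_g` for all `g`. -/
theorem partialAction_iff_lax {G X : Type*} [Group G] (Xg : G → Set X) (α : G → X → X) :
    (IsPartialAction Xg α → IsLaxPartialAction Xg α) ∧
    (IsLaxPartialAction Xg α →
      (IsPartialAction Xg α ↔ ∀ g : G, α g '' (Xg g⁻¹) ⊆ Xg g)) := by
  constructor
  · rintro ⟨⟨h1, h1'⟩, h2, h3⟩
    -- closure: α g maps Xg g⁻¹ into Xg g
    have clo : ∀ g : G, ∀ x ∈ Xg g⁻¹, α g x ∈ Xg g := by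
      intro g x hx
      have := h2 g 1 ⟨x, ⟨hx, by simp [h1]⟩, rfl⟩
      exact this.1
    have inv : ∀ g : G, ∀ x ∈ Xg g⁻¹, α g⁻¹ (α g x) = x := by
      intro g x hx
      have := h3 g g⁻¹ x ⟨hx, by simp [h1]⟩
      simpa [h1'] using this
    refine ⟨⟨h1, h1'⟩, ?_, ?_⟩
    · intro g h x hx hgx
      have hmem : α g x ∈ Xg g ∩ Xg h⁻¹ := ⟨clo g x hx, hgx⟩
      have := h2 g⁻¹ h⁻¹ ⟨α g x, by simpa using hmem, rfl⟩
      have hx' := this.2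
      rw [inv g x hx] at hx'
      simpa [mul_inv_rev] using hx'
    · intro g h x hx hgx
      have hx2 : x ∈ Xg (h * g)⁻¹ := by
        have hmem : α g x ∈ Xg g ∩ Xg h⁻¹ := ⟨clo g x hx, hgx⟩
        have := h2 g⁻¹ h⁻¹ ⟨α g x, by simpa using hmem, rfl⟩
        have hx' := this.2
        rw [inv g x hx] at hx'
        simpa [mul_inv_rev] using hx'
      exact h3 g h x ⟨hx, hx2⟩
  · rintro ⟨⟨h1, h1'⟩, h2, h3⟩
    constructor
    · rintro ⟨_, hPA2, _⟩ g y ⟨x, hx, rfl⟩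
      exact (hPA2 g 1 ⟨x, ⟨hx, by simp [h1]⟩, rfl⟩).1
    · intro clo
      have clo' : ∀ g : G, ∀ x ∈ Xg g⁻¹, α g x ∈ Xg g := fun g x hx =>
        clo g ⟨x, hx, rfl⟩
      have inv : ∀ g : G, ∀ x ∈ Xg g⁻¹, α g⁻¹ (α g x) = x := by
        intro g x hx
        have := h3 g g⁻¹ x hx (by simpa using clo' g x hx)
        simpa [h1'] using this
      refine ⟨⟨h1, h1'⟩, ?_, ?_⟩
      · rintro g h y ⟨x, ⟨hx1, hx2⟩, rfl⟩
        refine ⟨clo' g x hx1, ?_⟩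
        -- set y := α h⁻¹ x
        have hx2' : x ∈ Xg h⁻¹⁻¹ := by simpa using hx2
        have hy : α h⁻¹ x ∈ Xg h⁻¹ := clo' h⁻¹ x hx2'
        have hyx : α h (α h⁻¹ x) = x := by simpa using inv h⁻¹ x hx2'
        have hy2 : α h (α h⁻¹ x) ∈ Xg g⁻¹ := by rw [hyx]; exact hx1
        have hmem : α h⁻¹ x ∈ Xg (g * h)⁻¹ := by
          have := h2 h g (α h⁻¹ x) hy hy2
          simpa using this
        have heq : α g (α h (α h⁻¹ x)) = α (g * h) (α h⁻¹ x) := h3 h g _ hy hy2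
        rw [hyx] at heq
        rw [heq]
        exact clo' (g * h) _ hmem
      · rintro g h x ⟨hx1, hx2⟩
        -- z := α (h*g) x
        have hz : α (h * g) x ∈ Xg (h * g) := clo' (h * g) x hx2
        have hz' : α (h * g) x ∈ Xg ((h * g)⁻¹)⁻¹ := by simpa using hz
        have hzx : α (h * g)⁻¹ (α (h * g) x) = x := inv (h * g) x hx2
        have hz2 : α (h * g)⁻¹ (α (h * g) x) ∈ Xg g⁻¹ := by rw [hzx]; exact hx1
        have hzmem : α (h * g) x ∈ Xg h := by
          have := h2 (h * g)⁻¹ g (α (h * g) x) hz' hz2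
          simpa [mul_inv_rev, mul_assoc] using this
        have heq : α g (α (h * g)⁻¹ (α (h * g) x)) = α (g * (h * g)⁻¹) (α (h * g) x) :=
          h3 (h * g)⁻¹ g _ hz' hz2
        rw [hzx] at heq
        have heq' : α g x = α h⁻¹ (α (h * g) x) := by
          rw [heq]; congr 1; group
        have hgxmem : α g x ∈ Xg h⁻¹ := by
          rw [heq']
          exact clo' h⁻¹ _ (by simpa using hzmem)
        exact h3 g h x hx1 hgxmem
end

section
/- Let C be a bi-closed monoidal category, f : A → B an epimorphism and g : C → D a regular epimorphism. Then (B ⊗ D, B ⊗ g, f ⊗ D) is the pushout of the pair (f ⊗ C : A ⊗ C → B ⊗ C, A ⊗ g : A ⊗ C → A ⊗ D). -/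
open CategoryTheory CategoryTheory.MonoidalCategory CategoryTheory.Limits

universe v u

/-!
Write `g` as the coequalizer of `u, v : W ⟶ X`. Tensoring on the left is a left adjoint, so
`B ◁ g` is the coequalizer of `B ◁ u, B ◁ v`, and a cocone `(φ, ψ)` on the span descends along
`B ◁ g` as soon as `B ◁ u ≫ φ = B ◁ v ≫ φ`. By the interchange law, precomposing with the
epimorphism `f ▷ W` turns the two sides into `A ◁ (u ≫ g) ≫ ψ` and `A ◁ (v ≫ g) ≫ ψ`, which
agree. The remaining leg is checked after the epimorphism `A ◁ g`.
-/

theorem IsPushout.of_isColimit_cofork_of_epi {C : Type u} [Category.{v} C]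
    {P Q R S T : C} {h : P ⟶ Q} {k : P ⟶ R} {k' : Q ⟶ S} {h' : R ⟶ S}
    (comm : h ≫ k' = k ≫ h') [Epi k] {u v : T ⟶ Q} (w : u ≫ k' = v ≫ k')
    (hk' : IsColimit (Cofork.ofπ k' w))
    (H : ∀ {Z : C} (φ : Q ⟶ Z) (ψ : R ⟶ Z), h ≫ φ = k ≫ ψ → u ≫ φ = v ≫ φ) :
    IsPushout h k k' h' := by
  have : Epi k' := Cofork.IsColimit.epi hk'
  let desc (s : PushoutCocone h k) : S ⟶ s.pt :=
    Cofork.IsColimit.desc hk' s.inl (H _ _ s.condition)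
  have fac_left (s : PushoutCocone h k) : k' ≫ desc s = s.inl :=
    Cofork.IsColimit.π_desc' hk' _ _
  refine ⟨⟨comm⟩, ⟨PushoutCocone.IsColimit.mk comm desc fac_left (fun s => ?_)
    (fun s m hm _ => ?_)⟩⟩
  · rw [← cancel_epi k, ← reassoc_of% comm, fac_left, s.condition]
  · rw [← cancel_epi k', fac_left, hm]

theorem whiskerLeft_comp_eq_of_whiskerRight_comp_eq {C : Type u} [Category.{v} C]
    [MonoidalCategory C] {A B W X Y Z : C} (f : A ⟶ B) [Epi (f ▷ W)] {g : X ⟶ Y}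
    {u v : W ⟶ X} (w : u ≫ g = v ≫ g) (φ : B ⊗ X ⟶ Z) (ψ : A ⊗ Y ⟶ Z)
    (h : f ▷ X ≫ φ = A ◁ g ≫ ψ) : B ◁ u ≫ φ = B ◁ v ≫ φ := by
  rw [← cancel_epi (f ▷ W), ← whisker_exchange_assoc, ← whisker_exchange_assoc, h,
    ← whiskerLeft_comp_assoc, ← whiskerLeft_comp_assoc, w]

/-- In a bi-closed monoidal category, if `f : A ⟶ B` is an epimorphism and
`g : X ⟶ Y` a regular epimorphism, then `(B ⊗ Y, B ⊗ g, f ⊗ Y)` is the pushout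
of the pair `(f ⊗ X : A ⊗ X ⟶ B ⊗ X, A ⊗ g : A ⊗ X ⟶ A ⊗ Y)`. -/
theorem pushout_tensor_biclosed {C : Type u} [Category.{v} C] [MonoidalCategory C]
    [MonoidalClosed C] [∀ X : C, (tensorRight X).IsLeftAdjoint]
    {A B X Y : C} (f : A ⟶ B) (g : X ⟶ Y) [Epi f] [IsRegularEpi g] :
    IsPushout (f ▷ X) (A ◁ g) (B ◁ g) (f ▷ Y) := by
  obtain ⟨W, u, v, w, hg⟩ := IsRegularEpi.getStruct g
  have : Epi (f ▷ W) := (tensorRight W).map_epi f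
  have : Epi (A ◁ g) := (tensorLeft A).map_epi g
  exact IsPushout.of_isColimit_cofork_of_epi (whisker_exchange f g).symm _
    (isColimitCoforkMapOfIsColimit (tensorLeft B) w hg)
    (whiskerLeft_comp_eq_of_whiskerRight_comp_eq f w)
end

section
/- In the category of partial comodules over a k-coalgebra H, a morphism f is an epimorphism if and only if the underlying linear map U(f) is surjective. Consequently, the category of partial comodules is well-copowered. -/
open TensorProduct CategoryTheory

universe u

variable (k : Type u) [Field k] (H : Type u) [AddCommGroup H] [Module k H] [Coalgebra k H]

/-- A partial comodule datum over the coalgebra `H`: `(X, X•H, π, ρ)` with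
`π : X ⊗ H → X•H` surjective and `ρ : X → X•H` linear. -/
structure PComod where
  X : Type u
  [addX : AddCommGroup X]
  [modX : Module k X]
  XbH : Type u
  [addXbH : AddCommGroup XbH]
  [modXbH : Module k XbH]
  π : X ⊗[k] H →ₗ[k] XbH
  ρ : X →ₗ[k] XbH
  surj : Function.Surjective π

attribute [instance] PComod.addX PComod.modX PComod.addXbH PComod.modXbH

/-- Morphisms of partial comodule data: pairs `(f, f•H)` compatible with `π` and `ρ`.
(The component `f•H` is uniquely determined by `f`.) -/
@[ext]
structure PComodHom (A B : PComod k H) where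
  f : A.X →ₗ[k] B.X
  fbH : A.XbH →ₗ[k] B.XbH
  comm1 : fbH ∘ₗ A.π = B.π ∘ₗ TensorProduct.map f LinearMap.id
  comm2 : fbH ∘ₗ A.ρ = B.ρ ∘ₗ f

instance : Category (PComod k H) where
  Hom A B := PComodHom k H A B
  id A := ⟨LinearMap.id, LinearMap.id, by simp, by simp⟩
  comp {A B C} u v := ⟨v.f ∘ₗ u.f, v.fbH ∘ₗ u.fbH, by
      rw [LinearMap.comp_assoc, u.comm1, ← LinearMap.comp_assoc, v.comm1,
        LinearMap.comp_assoc, ← TensorProduct.map_comp]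
      simp, by
      rw [LinearMap.comp_assoc, u.comm2, ← LinearMap.comp_assoc, v.comm2,
        LinearMap.comp_assoc]⟩
  id_comp u := by apply PComodHom.ext <;> simp
  comp_id u := by apply PComodHom.ext <;> simp
  assoc u v w := by apply PComodHom.ext <;> simp [LinearMap.comp_assoc]

/-!
A surjective morphism `(f, f•H)` is epi because `f•H` is then surjective as well:
`f•H ∘ π_X = π_Y ∘ (f ⊗ H)` and `π_Y` is onto. Conversely, the images of `f` and `f•H` form a
pair of subspaces of `Y` and `Y•H` stable under `π_Y (- ⊗ H)` and `ρ_Y`, so the quotient of `Y` by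
this pair is again a partial comodule; an epimorphism cannot tell the quotient map from the zero
map, hence the images are everything. Finally every epimorphism out of `X` is isomorphic to the
quotient of `X` by the kernels of its components, so the quotients of `X` are indexed by the set
of such stable pairs of subspaces of `X`.
-/

lemma Submodule.bijective_liftQ_ker {R M N : Type*} [Ring R] [AddCommGroup M] [Module R M]
    [AddCommGroup N] [Module R N] {f : M →ₗ[R] N} (hf : Function.Surjective f) :
    Function.Bijective ((LinearMap.ker f).liftQ f le_rfl) :=
  ⟨LinearMap.ker_eq_bot.1 (Submodule.ker_liftQ_eq_bot _ _ _ le_rfl),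
    LinearMap.range_eq_top.1 ((Submodule.range_liftQ _ _ _).trans (LinearMap.range_eq_top.2 hf))⟩

namespace PComodHom

variable {k : Type u} [Field k] {H : Type u} [AddCommGroup H] [Module k H]
variable {A B : PComod k H}

lemma comm1_apply (u : A ⟶ B) (x : A.X) (h : H) :
    u.fbH (A.π (x ⊗ₜ h)) = B.π (u.f x ⊗ₜ h) := by
  simpa using LinearMap.congr_fun u.comm1 (x ⊗ₜ h)

lemma comm2_apply (u : A ⟶ B) (x : A.X) : u.fbH (A.ρ x) = B.ρ (u.f x) :=
  LinearMap.congr_fun u.comm2 x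

lemma fbH_surjective {u : A ⟶ B} (hf : Function.Surjective u.f) :
    Function.Surjective u.fbH := by
  have hπ : Function.Surjective (B.π ∘ₗ TensorProduct.map u.f LinearMap.id) :=
    B.surj.comp (TensorProduct.map_surjective hf Function.surjective_id)
  rw [← u.comm1, LinearMap.coe_comp] at hπ
  exact hπ.of_comp

lemma epi_of_surjective {u : A ⟶ B} (hf : Function.Surjective u.f) : Epi u where
  left_cancellation _ _ h := PComodHom.ext
    ((LinearMap.cancel_right hf).1 (congrArg PComodHom.f h))
    ((LinearMap.cancel_right (fbH_surjective hf)).1 (congrArg PComodHom.fbH h))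

def zero (A B : PComod k H) : A ⟶ B where
  f := 0
  fbH := 0
  comm1 := by ext; simp
  comm2 := by simp

noncomputable def isoOfBijective (u : A ⟶ B) (hf : Function.Bijective u.f)
    (hfbH : Function.Bijective u.fbH) : A ≅ B where
  hom := u
  inv :=
    { f := (LinearEquiv.ofBijective u.f hf).symm
      fbH := (LinearEquiv.ofBijective u.fbH hfbH).symm
      comm1 := TensorProduct.ext' fun x h => by
        simp only [LinearMap.coe_comp, LinearEquiv.coe_coe, Function.comp_apply,
          TensorProduct.map_tmul, LinearMap.id_coe, id_eq, LinearEquiv.symm_apply_eq,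
          LinearEquiv.ofBijective_apply, comm1_apply, LinearEquiv.apply_ofBijective_symm_apply]
      comm2 := LinearMap.ext fun x => by
        simp only [LinearMap.coe_comp, LinearEquiv.coe_coe, Function.comp_apply,
          LinearEquiv.symm_apply_eq, LinearEquiv.ofBijective_apply, comm2_apply,
          LinearEquiv.apply_ofBijective_symm_apply] }
  hom_inv_id := PComodHom.ext
    (LinearMap.ext <| LinearEquiv.ofBijective_symm_apply_apply u.f (h := hf))
    (LinearMap.ext <| LinearEquiv.ofBijective_symm_apply_apply u.fbH (h := hfbH))
  inv_hom_id := PComodHom.ext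
    (LinearMap.ext <| LinearEquiv.apply_ofBijective_symm_apply u.f)
    (LinearMap.ext <| LinearEquiv.apply_ofBijective_symm_apply u.fbH (h := hfbH))

end PComodHom

namespace PComod

variable {k : Type u} [Field k] {H : Type u} [AddCommGroup H] [Module k H]
variable {A B : PComod k H}

structure Congruence (A : PComod k H) where
  N : Submodule k A.X
  NbH : Submodule k A.XbH
  π_mem : ∀ x ∈ N, ∀ h : H, A.π (x ⊗ₜ h) ∈ NbH
  ρ_mem : ∀ x ∈ N, A.ρ x ∈ NbH

namespace Congruence

variable (c : Congruence A)

def quotientπ : (A.X ⧸ c.N) ⊗[k] H →ₗ[k] A.XbH ⧸ c.NbH :=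
  TensorProduct.lift <| c.N.liftQ (TensorProduct.curry (c.NbH.mkQ ∘ₗ A.π)) fun x hx =>
    LinearMap.mem_ker.2 <| LinearMap.ext fun h =>
      (Submodule.Quotient.mk_eq_zero _).2 (c.π_mem x hx h)

lemma quotientπ_comp_map_mkQ :
    c.quotientπ ∘ₗ TensorProduct.map c.N.mkQ LinearMap.id = c.NbH.mkQ ∘ₗ A.π :=
  TensorProduct.ext' fun _ _ => rfl

def quotient : PComod k H where
  X := A.X ⧸ c.N
  XbH := A.XbH ⧸ c.NbH
  π := c.quotientπ
  ρ := c.N.mapQ c.NbH A.ρ c.ρ_mem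
  surj := by
    have h := (c.NbH.mkQ_surjective).comp A.surj
    rw [← LinearMap.coe_comp, ← c.quotientπ_comp_map_mkQ, LinearMap.coe_comp] at h
    exact h.of_comp

def mkQ : A ⟶ c.quotient where
  f := c.N.mkQ
  fbH := c.NbH.mkQ
  comm1 := c.quotientπ_comp_map_mkQ.symm
  comm2 := rfl

instance epi_mkQ : Epi c.mkQ := PComodHom.epi_of_surjective c.N.mkQ_surjective

def lift (u : A ⟶ B) (hN : c.N ≤ LinearMap.ker u.f) (hNbH : c.NbH ≤ LinearMap.ker u.fbH) :
    c.quotient ⟶ B where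
  f := c.N.liftQ u.f hN
  fbH := c.NbH.liftQ u.fbH hNbH
  comm1 := TensorProduct.ext' fun x h =>
    Submodule.Quotient.induction_on _ x fun x => u.comm1_apply x h
  comm2 := LinearMap.ext fun x => Submodule.Quotient.induction_on _ x u.comm2_apply

@[simp] lemma mkQ_comp_lift (u : A ⟶ B) (hN : c.N ≤ LinearMap.ker u.f)
    (hNbH : c.NbH ≤ LinearMap.ker u.fbH) : c.mkQ ≫ c.lift u hN hNbH = u :=
  PComodHom.ext (c.N.liftQ_mkQ u.f hN) (c.NbH.liftQ_mkQ u.fbH hNbH)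

def ker (u : A ⟶ B) : Congruence A where
  N := LinearMap.ker u.f
  NbH := LinearMap.ker u.fbH
  π_mem x hx h := by
    rw [LinearMap.mem_ker, u.comm1_apply, LinearMap.mem_ker.1 hx, TensorProduct.zero_tmul,
      map_zero]
  ρ_mem x hx := by rw [LinearMap.mem_ker, u.comm2_apply, LinearMap.mem_ker.1 hx, map_zero]

def range (u : A ⟶ B) : Congruence B where
  N := LinearMap.range u.f
  NbH := LinearMap.range u.fbH
  π_mem := by
    rintro _ ⟨x, rfl⟩ h
    exact ⟨A.π (x ⊗ₜ h), u.comm1_apply x h⟩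
  ρ_mem := by
    rintro _ ⟨x, rfl⟩
    exact ⟨A.ρ x, u.comm2_apply x⟩

end Congruence

end PComod

namespace PComodHom

open PComod

variable {k : Type u} [Field k] {H : Type u} [AddCommGroup H] [Module k H]
variable {A B : PComod k H}

lemma surjective_of_epi (u : A ⟶ B) [Epi u] : Function.Surjective u.f := by
  have h : u ≫ (Congruence.range u).mkQ = u ≫ zero _ _ := PComodHom.ext
    (LinearMap.ext fun x => (Submodule.Quotient.mk_eq_zero _).2 ⟨x, rfl⟩)
    (LinearMap.ext fun y => (Submodule.Quotient.mk_eq_zero _).2 ⟨y, rfl⟩)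
  intro b
  exact (Submodule.Quotient.mk_eq_zero _).1
    (LinearMap.congr_fun (congrArg f (cancel_epi u |>.1 h)) b)

lemma epi_iff_surjective (u : A ⟶ B) : Epi u ↔ Function.Surjective u.f :=
  ⟨fun _ => surjective_of_epi u, epi_of_surjective⟩

noncomputable def quotientKerIso (u : A ⟶ B) (hf : Function.Surjective u.f) :
    (Congruence.ker u).quotient ≅ B :=
  isoOfBijective ((Congruence.ker u).lift u le_rfl le_rfl) (Submodule.bijective_liftQ_ker hf)
    (Submodule.bijective_liftQ_ker (fbH_surjective hf))

lemma mkQ_comp_quotientKerIso_hom (u : A ⟶ B) (hf : Function.Surjective u.f) :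
    (Congruence.ker u).mkQ ≫ (quotientKerIso u hf).hom = u :=
  Congruence.mkQ_comp_lift _ u le_rfl le_rfl

end PComodHom

/-- In the category of partial comodules over a coalgebra `H`, a morphism `f` is an
epimorphism iff the underlying linear map is surjective; consequently, the category
of partial comodules is well-copowered: every object has (up to isomorphism) only a
set of epimorphic quotients. -/
theorem epi_iff_surjective_and_wellCopowered :
    (∀ (A B : PComod k H) (u : A ⟶ B), Epi u ↔ Function.Surjective u.f) ∧
    (∀ A : PComod k H, ∃ (ι : Type u) (Q : ι → PComod k H) (q : ∀ i, A ⟶ Q i),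
      (∀ i, Epi (q i)) ∧
      ∀ (B : PComod k H) (u : A ⟶ B), Epi u →
        ∃ (i : ι) (e : Q i ≅ B), q i ≫ e.hom = u) := by
  refine ⟨fun A B u => PComodHom.epi_iff_surjective u, fun A => ?_⟩
  refine ⟨PComod.Congruence A, PComod.Congruence.quotient, PComod.Congruence.mkQ,
    fun c => c.epi_mkQ, fun B u hu => ?_⟩
  have hf := (PComodHom.epi_iff_surjective u).1 hu
  exact ⟨_, PComodHom.quotientKerIso u hf, PComodHom.mkQ_comp_quotientKerIso_hom u hf⟩
end

section
/- Let ι : B → A be a ring morphism. Then ι is pure as a morphism of left B-modules (i.e. for every right B-module P the map P → P ⊗_B A, p ↦ p ⊗ 1_A, is injective) if and only if for every right B-module N the fork N → N ⊗_B A ⇉ N ⊗_B A ⊗_B A (with the two maps n⊗a ↦ n⊗1⊗a and n⊗a ↦ n⊗a⊗1) is an equalizer. In particular, if A is faithfully flat as a left B-module then ι is pure. -/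
open TensorProduct

universe u

/-- Purity from faithful flatness. -/
lemma pure_of_faithfullyFlat {B : Type u} {A : Type u} [CommRing B] [Ring A]
    [Algebra B A] (h : Module.FaithfullyFlat B A)
    (P : Type u) [AddCommGroup P] [Module B P] :
    Function.Injective (fun p : P => (p ⊗ₜ[B] (1 : A) : P ⊗[B] A)) := by
  set f : P →ₗ[B] P ⊗[B] A := (TensorProduct.mk B P A).flip (1 : A) with hf
  have hretr : ∀ x : P ⊗[B] A,
      (LinearMap.lTensor P (LinearMap.mul' B A) ∘ₗ
        (TensorProduct.assoc B P A A).toLinearMap) ((f.rTensor A) x) = x := by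
    intro x
    induction x using TensorProduct.induction_on with
    | zero => simp
    | tmul p a => simp [f]
    | add x y hx hy => simp only [map_add, hx, hy]
  have hinj : Function.Injective (f.rTensor A) := by
    intro x y hxy
    have := congrArg (LinearMap.lTensor P (LinearMap.mul' B A) ∘ₗ
      (TensorProduct.assoc B P A A).toLinearMap) hxy
    rwa [hretr, hretr] at this
  have hex : Function.Exact ((0 : PUnit.{u+1} →ₗ[B] P).rTensor A) (f.rTensor A) := by
    rw [LinearMap.exact_iff, LinearMap.rTensor_zero, LinearMap.range_zero,
      LinearMap.ker_eq_bot]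
    exact hinj
  have hez := Module.FaithfullyFlat.rTensor_reflects_exact B A
    (0 : PUnit.{u+1} →ₗ[B] P) f hex
  rw [LinearMap.exact_iff, LinearMap.range_zero, LinearMap.ker_eq_bot] at hez
  intro p q hpq
  exact hez hpq

/-- `ι : B → A` is pure as a morphism of (right) `B`-modules iff for every
`B`-module `N` the fork `N → N ⊗_B A ⇉ N ⊗_B A ⊗_B A` is an equalizer; and
faithful flatness of `A` over `B` implies purity. -/
theorem pure_iff_equalizer_fork {B : Type u} {A : Type u} [CommRing B] [Ring A]
    [Algebra B A] :
    ((∀ (P : Type u) [AddCommGroup P] [Module B P],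
        Function.Injective (fun p : P => (p ⊗ₜ[B] (1 : A) : P ⊗[B] A))) ↔
      (∀ (N : Type u) [AddCommGroup N] [Module B N],
        Function.Injective (fun n : N => (n ⊗ₜ[B] (1 : A) : N ⊗[B] A)) ∧
        LinearMap.range ((TensorProduct.mk B N A).flip (1 : A)) =
          LinearMap.ker
            (((TensorProduct.mk B (N ⊗[B] A) A).flip (1 : A)) -
              TensorProduct.map ((TensorProduct.mk B N A).flip (1 : A))
                (LinearMap.id : A →ₗ[B] A)))) ∧
    (Module.FaithfullyFlat B A →
      ∀ (P : Type u) [AddCommGroup P] [Module B P],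
        Function.Injective (fun p : P => (p ⊗ₜ[B] (1 : A) : P ⊗[B] A))) := by
  constructor
  · constructor
    · intro hpure N _ _
      refine ⟨hpure N, ?_⟩
      set f : N →ₗ[B] N ⊗[B] A := (TensorProduct.mk B N A).flip (1 : A) with hf
      apply le_antisymm
      · rintro _ ⟨n, rfl⟩
        simp [LinearMap.mem_ker, f]
      · intro ξ hξ
        rw [LinearMap.mem_ker, LinearMap.sub_apply, sub_eq_zero] at hξ
        set Q := (N ⊗[B] A) ⧸ LinearMap.range f with hQ
        set π : (N ⊗[B] A) →ₗ[B] Q := (LinearMap.range f).mkQ with hπ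
        have key : (π ξ) ⊗ₜ[B] (1 : A) = 0 := by
          have h1 : LinearMap.rTensor A π (ξ ⊗ₜ[B] (1 : A)) = (π ξ) ⊗ₜ[B] 1 := rfl
          have hcomp : LinearMap.rTensor A π ∘ₗ
              TensorProduct.map f (LinearMap.id : A →ₗ[B] A) = 0 := by
            ext n a
            show LinearMap.rTensor A π ((f n) ⊗ₜ[B] a) = 0
            rw [LinearMap.rTensor_tmul, hπ, Submodule.mkQ_apply,
              (Submodule.Quotient.mk_eq_zero _).2 (LinearMap.mem_range_self f n),
              TensorProduct.zero_tmul]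
          have h2 : LinearMap.rTensor A π
              (TensorProduct.map f (LinearMap.id : A →ₗ[B] A) ξ) = 0 := by
            have := congrArg (fun g : _ →ₗ[B] _ => g ξ) hcomp
            simp only [LinearMap.zero_apply] at this
            exact this
          have hξ' : (ξ ⊗ₜ[B] (1 : A)) =
              TensorProduct.map f (LinearMap.id : A →ₗ[B] A) ξ := hξ
          rw [← h1, hξ', h2]
        have hz : π ξ = 0 := hpure Q (a₁ := π ξ) (a₂ := 0) (by simpa using key)
        rwa [hπ, Submodule.mkQ_apply, Submodule.Quotient.mk_eq_zero] at hz
    · intro heq P _ _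
      exact (heq P).1
  · intro h
    exact pure_of_faithfullyFlat h
end
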